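/- arXiv:2207.11488 — 5 statements merged into one kernel-verified Lean document; each statement's English description precedes it below -/
import Mathlib

section
/- Let $S \subseteq \mathbb{R}$ and let $H_0$ be the set of all finite sums of elements of $S$ with positive integer multiplicities. If there exist $a \neq 0$ and a sequence $b_n \in S$ with $b_n \neq -a$ for all $n$ and $\lim_{n\to\infty} b_n = -a$, such that $a \in S$ and $b_n \in S$ for all $n$, then $H_0$ is dense in $\mathbb{R}$. -/
open Filter Topology

lemma aux_nsmul_mem (H : AddSubsemigroup ℝ) {x : ℝ} (hx : x ∈ H) :
    ∀ n : ℕ, ((n + 1 : ℕ) : ℝ) * x ∈ H := by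
  intro n
  induction n with
  | zero => simpa using hx
  | succ k ih =>
    have : ((k + 1 + 1 : ℕ) : ℝ) * x = ((k + 1 : ℕ) : ℝ) * x + x := by
      push_cast; ring
    rw [this]
    exact H.add_mem ih hx

/-- If an additive subsemigroup of ℝ contains a negative element and arbitrarily small
positive elements, it is dense. -/
lemma aux_dense (H : AddSubsemigroup ℝ) {d : ℝ} (hd : d ∈ H) (hd0 : d < 0)
    (hsmall : ∀ ε > 0, ∃ h ∈ H, 0 < h ∧ h < ε) : Dense (H : Set ℝ) := by
  rw [dense_iff_exists_between]
  intro x y hxy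
  obtain ⟨h, hhH, hh0, hhlt⟩ := hsmall (y - x) (by linarith)
  obtain ⟨m, hm0⟩ := exists_nat_gt ((x - h) / d)
  have hmd : ((m + 1 : ℕ) : ℝ) * d < x - h := by
    have hm1 : (x - h) / d < ((m + 1 : ℕ) : ℝ) := by
      push_cast; linarith
    calc ((m + 1 : ℕ) : ℝ) * d < ((x - h) / d) * d := mul_lt_mul_of_neg_right hm1 hd0
      _ = x - h := div_mul_cancel₀ (x - h) (ne_of_lt hd0)
  have hKne : ∃ k : ℕ, x < ((m + 1 : ℕ) : ℝ) * d + ((k + 1 : ℕ) : ℝ) * h := by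
    obtain ⟨k, hk⟩ := exists_nat_gt ((x - ((m + 1 : ℕ) : ℝ) * d) / h)
    refine ⟨k, ?_⟩
    have hk1 : (x - ((m + 1 : ℕ) : ℝ) * d) / h < ((k + 1 : ℕ) : ℝ) := by
      push_cast; push_cast at hk; linarith
    have : (x - ((m + 1 : ℕ) : ℝ) * d) < ((k + 1 : ℕ) : ℝ) * h := by
      calc (x - ((m + 1 : ℕ) : ℝ) * d) = ((x - ((m + 1 : ℕ) : ℝ) * d) / h) * h := by
            field_simp
        _ < ((k + 1 : ℕ) : ℝ) * h := mul_lt_mul_of_pos_right hk1 hh0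
    linarith
  classical
  set k0 := Nat.find hKne with hk0def
  have hk0 : x < ((m + 1 : ℕ) : ℝ) * d + ((k0 + 1 : ℕ) : ℝ) * h := Nat.find_spec hKne
  have hk0pos : k0 ≠ 0 := by
    intro h0
    rw [h0] at hk0
    have hmd' := hmd
    push_cast at hk0 hmd'
    linarith
  obtain ⟨j, hj⟩ := Nat.exists_eq_succ_of_ne_zero hk0pos
  have hmin : ¬ (x < ((m + 1 : ℕ) : ℝ) * d + ((j + 1 : ℕ) : ℝ) * h) :=
    Nat.find_min hKne (by omega)
  push_neg at hmin
  have hjk : ((k0 + 1 : ℕ) : ℝ) * h = ((j + 1 : ℕ) : ℝ) * h + h := by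
    rw [hj]; push_cast; ring
  refine ⟨((m + 1 : ℕ) : ℝ) * d + ((k0 + 1 : ℕ) : ℝ) * h,
    H.add_mem (aux_nsmul_mem H hd m) (aux_nsmul_mem H hhH k0), hk0, ?_⟩
  rw [hjk]
  linarith

/-- If `S ⊆ ℝ` contains a nonzero element `a` and a sequence `b n ∈ S` with `b n ≠ -a`
converging to `-a`, then the additive semigroup generated by `S` is dense in `ℝ`. -/
theorem stmt_1 (S : Set ℝ) (a : ℝ) (ha : a ∈ S) (ha0 : a ≠ 0)
    (b : ℕ → ℝ) (hbS : ∀ n, b n ∈ S) (hbne : ∀ n, b n ≠ -a)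
    (hlim : Tendsto b atTop (𝓝 (-a))) :
    Dense ((AddSubsemigroup.closure S : AddSubsemigroup ℝ) : Set ℝ) := by
  set H := (AddSubsemigroup.closure S : AddSubsemigroup ℝ) with hHdef
  have haH : a ∈ H := AddSubsemigroup.subset_closure ha
  have hbH : ∀ n, b n ∈ H := fun n => AddSubsemigroup.subset_closure (hbS n)
  have hcH : ∀ n, a + b n ∈ H := fun n => H.add_mem haH (hbH n)
  have hc0 : ∀ n, a + b n ≠ 0 := fun n hn => hbne n (by linarith)
  have hclim : Tendsto (fun n => a + b n) atTop (𝓝 0) := by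
    have := hlim.const_add a
    simpa using this
  -- H contains a positive element and a negative element
  have hposel : ∃ u ∈ H, 0 < u := by
    rcases lt_or_gt_of_ne ha0 with h1 | h1
    · obtain ⟨n, hn⟩ := (hlim.eventually_const_lt (show (0:ℝ) < -a by linarith)).exists
      exact ⟨b n, hbH n, hn⟩
    · exact ⟨a, haH, h1⟩
  have hnegel : ∃ d ∈ H, d < 0 := by
    rcases lt_or_gt_of_ne ha0 with h1 | h1
    · exact ⟨a, haH, h1⟩
    · obtain ⟨n, hn⟩ := (hlim.eventually_lt_const (show -a < 0 by linarith)).exists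
      exact ⟨b n, hbH n, hn⟩
  obtain ⟨u, huH, hu⟩ := hposel
  obtain ⟨d, hdH, hd⟩ := hnegel
  by_cases hfr : ∃ᶠ n in atTop, 0 < a + b n
  · -- arbitrarily small positive elements
    refine aux_dense H hdH hd (fun ε hε => ?_)
    have hev : ∀ᶠ n in atTop, a + b n < ε := hclim.eventually_lt_const hε
    obtain ⟨n, hn1, hn2⟩ := (hfr.and_eventually hev).exists
    exact ⟨a + b n, hcH n, hn1, hn2⟩
  · -- eventually a + b n < 0 : work with the negated semigroup
    rw [Filter.not_frequently] at hfr
    have hev : ∀ᶠ n in atTop, a + b n < 0 := by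
      filter_upwards [hfr] with n hn
      push_neg at hn
      exact lt_of_le_of_ne hn (hc0 n)
    set f : AddHom ℝ ℝ := ⟨fun x => -x, fun x y => by ring⟩ with hf
    set H' := AddSubsemigroup.map f H with hH'
    have hmem : ∀ x ∈ H, -x ∈ H' := fun x hx => ⟨x, hx, rfl⟩
    have hdense' : Dense (H' : Set ℝ) := by
      refine aux_dense H' (hmem u huH) (by linarith) (fun ε hε => ?_)
      have hev2 : ∀ᶠ n in atTop, -ε < a + b n :=
        hclim.eventually_const_lt (by linarith)
      obtain ⟨n, hn1, hn2⟩ := (hev.and hev2).exists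
      exact ⟨-(a + b n), hmem _ (hcH n), by linarith, by linarith⟩
    have himg : (H : Set ℝ) = Neg.neg '' (H' : Set ℝ) := by
      ext x
      constructor
      · intro hx
        exact ⟨-x, hmem x hx, by simp⟩
      · rintro ⟨y, ⟨z, hz, rfl⟩, rfl⟩
        simpa [hf] using hz
    rw [himg]
    exact (Function.Surjective.denseRange neg_surjective).dense_image continuous_neg hdense'
end

section
/- Let $S \subseteq \mathbb{R}$, let $S^+ = \{x \in S : x > 0\}$ and $S^- = \{x \in S : x < 0\}$, and suppose both $S^+$ and $S^-$ have strictly positive Lebesgue measure. Then the additive semigroup $H_0$ generated by $S$ (all finite sums of elements of $S$ with positive integer multiplicities) is dense in $\mathbb{R}$. -/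
open MeasureTheory Set
open scoped ENNReal Pointwise Topology

/-!
By the Steinhaus theorem for sumsets, `S⁺ + S⁺ ⊆ H₀` contains an interval `(a, b)` with
`0 < a`. Then `m • (a, b) = (m a, m b) ⊆ H₀` for every `m ≥ 1`, and these intervals cover a ray
`(T, ∞)`. Adding enough copies of a negative element of `S` brings every real number into that
ray, so `H₀ = ℝ`.
-/

theorem AddSubsemigroup.succ_nsmul_mem {M : Type*} [AddMonoid M] (H : AddSubsemigroup M) {x : M}
    (hx : x ∈ H) (n : ℕ) : (n + 1) • x ∈ H := by
  induction n with
  | zero => simpa using hx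
  | succ n ih => simpa only [succ_nsmul _ (n + 1)] using H.add_mem ih hx

theorem lintegral_measure_inter_preimage_const_sub {G : Type*} [MeasurableSpace G]
    [AddCommGroup G] [MeasurableAdd₂ G] [MeasurableNeg G] (μ : Measure G) [SFinite μ]
    [μ.IsAddLeftInvariant] {A B : Set G} (hA : MeasurableSet A) (hB : MeasurableSet B) :
    ∫⁻ x, μ (A ∩ (x - ·) ⁻¹' B) ∂μ = μ A * μ B := by
  have hmeas : Measurable fun p : G × G => B.indicator (1 : G → ℝ≥0∞) (p.1 - p.2) :=
    (measurable_one.indicator hB).comp measurable_sub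
  calc ∫⁻ x, μ (A ∩ (x - ·) ⁻¹' B) ∂μ
      = ∫⁻ x, ∫⁻ y, A.indicator 1 y * B.indicator 1 (x - y) ∂μ ∂μ := by
        refine lintegral_congr fun x => ?_
        rw [← lintegral_indicator_one (hA.inter (measurable_const_sub x hB))]
        refine lintegral_congr fun y => ?_
        simp only [indicator, mem_inter_iff, mem_preimage, Pi.one_apply]
        split_ifs <;> simp_all
    _ = ∫⁻ y, A.indicator 1 y * ∫⁻ x, B.indicator 1 (x - y) ∂μ ∂μ := by
        rw [lintegral_lintegral_swap]
        · exact lintegral_congr fun y =>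
            lintegral_const_mul _ (hmeas.comp (measurable_id.prodMk measurable_const))
        · exact (((measurable_one.indicator hA).comp measurable_snd).mul hmeas).aemeasurable
    _ = μ A * μ B := by
        simp_rw [lintegral_sub_right_eq_self (B.indicator 1), lintegral_indicator_one hB]
        rw [lintegral_mul_const _ (measurable_one.indicator hA), lintegral_indicator_one hA]

theorem exists_add_mem_nhds_of_addHaar_pos {G : Type*} [TopologicalSpace G] [AddCommGroup G]
    [IsTopologicalAddGroup G] [LocallyCompactSpace G] [MeasurableSpace G] [BorelSpace G]
    [MeasurableAdd₂ G] (μ : Measure G) [μ.IsAddHaarMeasure] [μ.InnerRegular] [SFinite μ]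
    {A B : Set G} (hA : MeasurableSet A) (hB : MeasurableSet B) (hA0 : 0 < μ A)
    (hB0 : 0 < μ B) : ∃ x, A + B ∈ 𝓝 x := by
  -- `x + (E - E) ⊆ A + B` for `E = A ∩ (x - B)`, so it suffices that some such `E` is not null.
  obtain ⟨x, hx⟩ : ∃ x, 0 < μ (A ∩ (x - ·) ⁻¹' B) := by
    by_contra! h
    have := lintegral_measure_inter_preimage_const_sub μ hA hB
    simp only [nonpos_iff_eq_zero.1 (h _), lintegral_zero] at this
    exact (ENNReal.mul_pos hA0.ne' hB0.ne').ne this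
  set E := A ∩ (x - ·) ⁻¹' B
  have hE : E - E ∈ 𝓝 0 := μ.sub_mem_nhds_zero_of_addHaar_pos E
    (hA.inter (measurable_const_sub x hB)) hx
  have hxE : x +ᵥ (E - E) ∈ 𝓝 x := by
    simpa only [vadd_eq_add, add_zero] using (vadd_mem_nhds_vadd_iff (t := E - E) x).2 hE
  refine ⟨x, Filter.mem_of_superset hxE ?_⟩
  rintro _ ⟨_, ⟨e₁, ⟨he₁, -⟩, e₂, ⟨-, he₂⟩, rfl⟩, rfl⟩
  exact ⟨e₁, he₁, x - e₂, he₂, by simp only [vadd_eq_add]; abel⟩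

theorem AddSubsemigroup.exists_Ioi_subset_of_Ioo_subset {K : Type*} [Field K] [LinearOrder K]
    [IsStrictOrderedRing K] [FloorSemiring K] {H : AddSubsemigroup K} {a b : K} (ha : 0 < a)
    (hab : a < b) (h : Ioo a b ⊆ H) : ∃ T, Ioi T ⊆ (H : Set K) := by
  -- For `z > ab / (b - a)` the interval `(z / b, z / a)` is longer than `1`, so it contains an
  -- integer `m + 1`, and then `z / (m + 1) ∈ (a, b)`.
  refine ⟨a * b / (b - a), fun z (hz : _ < z) => ?_⟩
  have hb : 0 < b := ha.trans hab
  rw [div_lt_iff₀ (sub_pos.2 hab)] at hz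
  have hz0 : 0 < z := by nlinarith
  set m := ⌊z / b⌋₊
  have hm_le : (m : K) * b ≤ z := (le_div_iff₀ hb).1 (Nat.floor_le (div_pos hz0 hb).le)
  have hm_lt : z < (m + 1) * b := (div_lt_iff₀ hb).1 (Nat.lt_floor_add_one _)
  have hm1 : (0 : K) < m + 1 := by positivity
  have hmem : z / (m + 1) ∈ Ioo a b := by
    rw [mem_Ioo, lt_div_iff₀ hm1, div_lt_iff₀ hm1]
    constructor <;> nlinarith
  simpa [nsmul_eq_mul, mul_div_cancel₀ _ hm1.ne'] using H.succ_nsmul_mem (h hmem) m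

theorem AddSubsemigroup.eq_top_of_Ioi_subset {G : Type*} [AddCommGroup G] [LinearOrder G]
    [IsOrderedAddMonoid G] [Archimedean G] {H : AddSubsemigroup G} {T q : G}
    (hT : Ioi T ⊆ (H : Set G)) (hq : q ∈ H) (hq0 : q < 0) : H = ⊤ := by
  refine eq_top_iff.2 fun z _ => ?_
  obtain ⟨n, hn⟩ := Archimedean.arch (T - z) (neg_pos.2 hq0)
  have hzq : T < z + (n + 1) • -q := calc
    T = z + (T - z) := by abel
    _ ≤ z + n • -q := by gcongr
    _ < z + (n + 1) • -q := by
      rw [succ_nsmul]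
      gcongr
      exact lt_add_of_pos_right _ (neg_pos.2 hq0)
  simpa using H.add_mem (hT hzq) (H.succ_nsmul_mem hq n)

/-- If both the positive part and the negative part of a Borel set `S ⊆ ℝ` have strictly
positive Lebesgue measure, then the additive semigroup generated by `S` is dense in `ℝ`. -/
theorem stmt_3 (S : Set ℝ) (hS : MeasurableSet S)
    (hpos : 0 < volume (S ∩ Ioi (0 : ℝ)))
    (hneg : 0 < volume (S ∩ Iio (0 : ℝ))) :
    Dense ((AddSubsemigroup.closure S : AddSubsemigroup ℝ) : Set ℝ) := by
  set H := AddSubsemigroup.closure S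
  set P := S ∩ Ioi (0 : ℝ)
  have hP : MeasurableSet P := hS.inter measurableSet_Ioi
  have hPP : P + P ⊆ H := add_subset_iff.2 fun a ha b hb =>
    H.add_mem (AddSubsemigroup.subset_closure ha.1) (AddSubsemigroup.subset_closure hb.1)
  obtain ⟨x, hx⟩ := exists_add_mem_nhds_of_addHaar_pos volume hP hP hpos hpos
  have hx0 : 0 < x := by
    obtain ⟨a, ⟨-, ha⟩, b, ⟨-, hb⟩, rfl⟩ := mem_of_mem_nhds hx
    exact add_pos ha hb
  obtain ⟨l, u, ⟨hl, hu⟩, hlu⟩ := mem_nhds_iff_exists_Ioo_subset.1 hx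
  obtain ⟨T, hT⟩ := AddSubsemigroup.exists_Ioi_subset_of_Ioo_subset hx0 hu
    ((Ioo_subset_Ioo_left hl.le).trans (hlu.trans hPP))
  obtain ⟨q, hqS, hq0⟩ := nonempty_of_measure_ne_zero hneg.ne'
  rw [AddSubsemigroup.eq_top_of_Ioi_subset hT (AddSubsemigroup.subset_closure hqS) hq0,
    AddSubsemigroup.coe_top]
  exact dense_univ
end

section
/- Let $H_0 \subseteq \mathbb{R}$ be a set closed under addition. Then $H_0$ is dense in $\mathbb{R}$ if and only if there exist elements $a, b \in H_0 \setminus \{0\}$ with $a < 0 < b$ and a sequence $a_n \in H_0 \setminus \{0\}$ with $\lim_{n\to\infty} a_n = 0$. -/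
open Filter Topology

private lemma mem_add_nsmul (H : Set ℝ) (hadd : ∀ x ∈ H, ∀ y ∈ H, x + y ∈ H)
    {x e : ℝ} (hx : x ∈ H) (he : e ∈ H) : ∀ n : ℕ, x + n * e ∈ H := by
  intro n
  induction n with
  | zero => simpa using hx
  | succ n ih =>
    have h := hadd _ ih _ he
    convert h using 1
    push_cast; ring

private lemma key (H : Set ℝ) (hadd : ∀ x ∈ H, ∀ y ∈ H, x + y ∈ H)
    {a e : ℝ} (ha : a ∈ H) (ha0 : a < 0) (he : e ∈ H) (he0 : 0 < e)
    (x : ℝ) : ∃ y ∈ H, x ≤ y ∧ y < x + e := by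
  obtain ⟨m, hm⟩ := exists_nat_gt ((-x) / (-a))
  have hb : a + m * a < x := by
    have : (-x) < m * (-a) := (div_lt_iff₀ (by linarith)).mp hm
    nlinarith
  have hbH : a + m * a ∈ H := mem_add_nsmul H hadd ha ha m
  set b := a + m * a with hbdef
  set k : ℕ := ⌈(x - b) / e⌉₊ with hk
  refine ⟨b + k * e, mem_add_nsmul H hadd hbH he k, ?_, ?_⟩
  · have h1 : (x - b) / e ≤ k := Nat.le_ceil _
    have := (div_le_iff₀ he0).mp h1
    linarith
  · have h2 : (k : ℝ) < (x - b) / e + 1 := by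
      have h0 : 0 ≤ (x - b) / e := div_nonneg (by linarith) he0.le
      exact Nat.ceil_lt_add_one h0
    have : (k : ℝ) * e < ((x - b) / e + 1) * e := by
      exact mul_lt_mul_of_pos_right h2 he0
    have hdiv : (x - b) / e * e = x - b := div_mul_cancel₀ _ he0.ne'
    nlinarith

/-- A subset `H₀ ⊆ ℝ` closed under addition is dense in `ℝ` if and only if it contains a
negative element, a positive element, and a sequence of nonzero elements tending to `0`. -/
theorem stmt_4 (H₀ : Set ℝ) (hadd : ∀ x ∈ H₀, ∀ y ∈ H₀, x + y ∈ H₀) :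
    Dense H₀ ↔
      (∃ a ∈ H₀, a < 0) ∧ (∃ b ∈ H₀, 0 < b) ∧
        ∃ c : ℕ → ℝ, (∀ n, c n ∈ H₀) ∧ (∀ n, c n ≠ 0) ∧ Tendsto c atTop (𝓝 0) := by
  constructor
  · intro hd
    obtain ⟨a, haI, haH⟩ := hd.exists_between (show (-1 : ℝ) < 0 by norm_num)
    obtain ⟨b, hbI, hbH⟩ := hd.exists_between (show (0 : ℝ) < 1 by norm_num)
    have hc : ∀ n : ℕ, ∃ c ∈ H₀, c ∈ Set.Ioo (0 : ℝ) (1 / (n + 1)) := by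
      intro n
      exact hd.exists_between (by positivity)
    choose c hcH hcI using hc
    refine ⟨⟨a, haI, haH.2⟩, ⟨b, hbI, hbH.1⟩, c, hcH, fun n => (hcI n).1.ne', ?_⟩
    apply squeeze_zero (fun n => (hcI n).1.le) (fun n => (hcI n).2.le)
    exact tendsto_one_div_add_atTop_nhds_zero_nat
  · rintro ⟨⟨a, haH, ha0⟩, ⟨b, hbH, hb0⟩, c, hcH, hcne, hc0⟩
    rw [Metric.dense_iff]
    intro x r hr
    have : ∀ᶠ n in atTop, |c n| < r := by
      have := hc0 (Metric.ball_mem_nhds 0 hr)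
      simpa [Real.dist_eq] using this
    obtain ⟨n, hn⟩ := this.exists
    rcases (hcne n).lt_or_gt with hneg | hpos
    · -- c n < 0 : mirror argument using b > 0
      have he0 : 0 < -(c n) := by linarith
      -- apply key to the reflected set
      set N : Set ℝ := {t | -t ∈ H₀} with hN
      have hNadd : ∀ x ∈ N, ∀ y ∈ N, x + y ∈ N := by
        intro u hu v hv
        have := hadd _ hu _ hv
        simpa [hN, neg_add, add_comm] using this
      have haN : -b ∈ N := by simpa [hN] using hbH
      have heN : -(c n) ∈ N := by simpa [hN] using hcH n
      obtain ⟨y, hyN, hy1, hy2⟩ := key N hNadd haN (by linarith) heN he0 (-x)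
      refine ⟨-y, ?_, hyN⟩
      rw [Metric.mem_ball, Real.dist_eq, abs_lt]
      rw [abs_lt] at hn
      constructor <;> nlinarith
    · obtain ⟨y, hyH, hy1, hy2⟩ := key H₀ hadd haH ha0 (hcH n) hpos x
      refine ⟨y, ?_, hyH⟩
      rw [Metric.mem_ball, Real.dist_eq, abs_lt]
      rw [abs_lt] at hn
      constructor <;> nlinarith
end

section
/- Let $a \neq 0$ be a real number and $(b_n)$ a sequence of nonzero reals with $b_n \to \infty$ such that some subsequence of $(n a + b_n)_{n \in \mathbb{N}}$ strictly increases (or strictly decreases) to $0$. Then the additive semigroup generated by $\{a\} \cup \{b_n : n \in \mathbb{N}\}$ (finite sums with positive integer multiplicities) is dense in $\mathbb{R}$. -/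
open Filter Topology

private lemma step_lemma {c u v s : ℝ} (hc : 0 < c) (hcv : c < v - u) (hs : s < u) :
    ∃ m : ℕ, 1 ≤ m ∧ u < s + m * c ∧ s + m * c < v := by
  classical
  have hex : ∃ n : ℕ, u < s + n * c := by
    obtain ⟨n, hn⟩ := exists_nat_gt ((u - s) / c)
    exact ⟨n, by rw [div_lt_iff₀ hc] at hn; linarith⟩
  set m := Nat.find hex with hmdef
  have h1 : u < s + m * c := Nat.find_spec hex
  have hm1 : 1 ≤ m := by
    rcases Nat.eq_zero_or_pos m with h | h
    · exfalso; rw [h] at h1; push_cast at h1; linarith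
    · exact h
  have h2 : ¬ u < s + (m - 1 : ℕ) * c := Nat.find_min hex (by omega)
  push_neg at h2
  have hcast : ((m - 1 : ℕ) : ℝ) = (m : ℝ) - 1 := by
    push_cast [Nat.cast_sub hm1]; ring
  rw [hcast] at h2
  exact ⟨m, hm1, h1, by nlinarith⟩

private lemma nsmul_mem' (S : AddSubsemigroup ℝ) {x : ℝ} (hx : x ∈ S) :
    ∀ m : ℕ, 1 ≤ m → m • x ∈ S := by
  intro m hm
  induction m with
  | zero => omega
  | succ n ih =>
    rcases Nat.eq_zero_or_pos n with h | h
    · simpa [h] using hx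
    · rw [succ_nsmul]; exact S.add_mem (ih h) hx

/-- If `a ≠ 0`, the nonzero `b n` tend to `+∞`, and some subsequence of `n a + b n` is
strictly monotone converging to `0` (from below or from above), then the additive
semigroup generated by `{a} ∪ {b n}` is dense in `ℝ`. -/
theorem stmt_17 (a : ℝ) (ha : a ≠ 0) (b : ℕ → ℝ) (hbne : ∀ n, b n ≠ 0)
    (hbtop : Tendsto b atTop atTop)
    (hsub : ∃ φ : ℕ → ℕ, StrictMono φ ∧
      ((StrictMono (fun k => (φ k : ℝ) * a + b (φ k)) ∧
          ∀ k, (φ k : ℝ) * a + b (φ k) < 0) ∨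
        (StrictAnti (fun k => (φ k : ℝ) * a + b (φ k)) ∧
          ∀ k, 0 < (φ k : ℝ) * a + b (φ k))) ∧
      Tendsto (fun k => (φ k : ℝ) * a + b (φ k)) atTop (𝓝 0)) :
    Dense ((AddSubsemigroup.closure ({a} ∪ Set.range b) : AddSubsemigroup ℝ) : Set ℝ) := by
  obtain ⟨φ, hφ, hcase, hlim⟩ := hsub
  set S := AddSubsemigroup.closure ({a} ∪ Set.range b) with hS
  set c : ℕ → ℝ := fun k => (φ k : ℝ) * a + b (φ k) with hc
  have haS : a ∈ S := AddSubsemigroup.subset_closure (Or.inl rfl)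
  have hbS : ∀ n, b n ∈ S := fun n => AddSubsemigroup.subset_closure (Or.inr ⟨n, rfl⟩)
  have hcS : ∀ k, 1 ≤ k → c k ∈ S := by
    intro k hk
    have hφk : 1 ≤ φ k := le_trans hk hφ.le_apply
    have : (φ k : ℝ) * a = (φ k) • a := by simp [nsmul_eq_mul]
    rw [hc]
    simp only []
    rw [this]
    exact S.add_mem (nsmul_mem' S haS _ hφk) (hbS _)
  -- a < 0
  have hbφ : Tendsto (fun k => b (φ k)) atTop atTop := hbtop.comp hφ.tendsto_atTop
  have haneg : a < 0 := by
    rcases ha.lt_or_gt with h | h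
    · exact h
    · exfalso
      have h1 : ∀ᶠ k in atTop, 1 < b (φ k) := hbφ.eventually_gt_atTop 1
      have h2 : ∀ᶠ k in atTop, c k < 1 := hlim.eventually_lt_const one_pos
      obtain ⟨k, hk1, hk2⟩ := (h1.and h2).exists
      have : (0:ℝ) ≤ (φ k : ℝ) * a := mul_nonneg (Nat.cast_nonneg _) h.le
      have : 1 < c k := by
        have : b (φ k) ≤ c k := by simp only [hc]; linarith
        linarith
      linarith
  rw [dense_iff_exists_between]
  intro u v huv
  -- pick k with k ≥ 1 and |c k| < v - u
  have habs : ∀ᶠ k in atTop, |c k| < v - u := by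
    have h : Tendsto (fun k => |c k|) atTop (𝓝 0) := by
      simpa using hlim.abs
    exact h.eventually_lt_const (by linarith)
  obtain ⟨k, hkabs, hk1⟩ := (habs.and (eventually_ge_atTop 1)).exists
  have hckS : c k ∈ S := hcS k hk1
  rcases hcase with ⟨_, hneg⟩ | ⟨_, hpos⟩
  · -- c k < 0 : start from a large b n and step down
    have hckneg : c k < 0 := hneg k
    obtain ⟨n, hn⟩ := (hbtop.eventually (eventually_gt_atTop v)).exists
    have habs' : -c k < v - u := by
      rw [abs_lt] at hkabs; linarith [hkabs.1]
    obtain ⟨m, hm1, hlo, hhi⟩ := step_lemma (c := -c k) (u := -v) (v := -u) (s := -b n)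
      (by linarith) (by linarith) (by linarith)
    have e : b n + m • c k = b n + (m : ℝ) * c k := by simp [nsmul_eq_mul]
    refine ⟨b n + m • c k, S.add_mem (hbS n) (nsmul_mem' S hckS m hm1), ?_, ?_⟩
    · rw [e]; nlinarith [hhi]
    · rw [e]; nlinarith [hlo]
  · -- c k > 0 : start from j • a below u and step up
    have hckpos : 0 < c k := hpos k
    have habs' : c k < v - u := by
      rw [abs_lt] at hkabs; linarith [hkabs.2]
    obtain ⟨j, hj⟩ := exists_nat_gt (max 1 (u / a))
    have hj1 : 1 ≤ j := by
      have h := (le_max_left (1:ℝ) (u / a)).trans hj.le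
      exact_mod_cast h
    have hja : (j : ℝ) * a < u := by
      have hj2 : u / a < j := lt_of_le_of_lt (le_max_right 1 (u / a)) hj
      calc (j : ℝ) * a < (u / a) * a := by
            exact mul_lt_mul_of_neg_right hj2 haneg
        _ = u := by field_simp
    obtain ⟨m, hm1, hlo, hhi⟩ := step_lemma (c := c k) (u := u) (v := v) (s := (j:ℝ) * a)
      hckpos (by linarith) hja
    have e : (j : ℕ) • a + (m : ℕ) • c k = (j : ℝ) * a + (m : ℝ) * c k := by
      simp [nsmul_eq_mul]
    refine ⟨j • a + m • c k,
      S.add_mem (nsmul_mem' S haS j hj1) (nsmul_mem' S hckS m hm1), ?_, ?_⟩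
    · rw [e]; exact hlo
    · rw [e]; exact hhi
end

section
/- Let $H = \mathbb{R}^d$ with orthonormal basis $e_1, \ldots, e_d$, and let $q : \mathbb{R}^d \to [0, \infty)$ be continuous with $q(e_i) > 0$ for each $i = 1, \ldots, d$ and $q(-\sum_{i=1}^d e_i) > 0$. Define the measure $\nu(dz) = q(z)\,dz$. Then for every $h \in \mathbb{R}^d$ and $\eta > 0$ there exist $n \in \mathbb{N}$, positive $\eta_1, \ldots, \eta_n$, and $a_1, \ldots, a_n \in \mathbb{R}^d \setminus \{0\}$ with $0 \notin \overline{B(a_i, \eta_i)}$, $\nu(B(a_i, \eta_i)) > 0$, and $\sum_{i=1}^n B(a_i, \eta_i) \subseteq B(h, \eta)$. -/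
/-!
With `E = ∑ i, eᵢ`, the point `b = -E + K⁻¹ • h` lies, for `K` large, in the open set
`{q > 0} \ {0}` around `-E`, and `h` is the sum of `K` copies of each `eᵢ` and of `b`.
Balls of small radius about these `K (d + 1)` centres avoid `0`, have positive `ν`-measure
by continuity of `q`, and their sum lies in `B(h, η)` once the radii add up to less than `η`.
-/

open MeasureTheory Metric

open Filter Topology in
theorem exists_nat_add_inv_smul_mem {V : Type*} [AddCommGroup V] [Module ℝ V] [TopologicalSpace V]
    [ContinuousAdd V] [ContinuousSMul ℝ V] {S : Set V} {p : V} (hS : S ∈ 𝓝 p) (h : V) :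
    ∃ K : ℕ, 0 < K ∧ p + (K : ℝ)⁻¹ • h ∈ S := by
  have hlim : Tendsto (fun K : ℕ => p + (K : ℝ)⁻¹ • h) atTop (𝓝 p) := by
    simpa using tendsto_const_nhds.add ((tendsto_inv_atTop_nhds_zero_nat (𝕜 := ℝ)).smul_const h)
  exact ((hlim.eventually_mem hS).and (eventually_gt_atTop 0)).exists.imp fun _ hK => hK.symm

theorem sum_finProdFinEquiv_symm_snd {M : Type*} [AddCommMonoid M] (K : ℕ) {m : ℕ}
    (c : Fin m → M) : ∑ j : Fin (K * m), c (finProdFinEquiv.symm j).2 = K • ∑ i, c i := by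
  rw [finProdFinEquiv.symm.sum_comp (fun p => c p.2), Fintype.sum_prod_type]
  simp

theorem exists_fin_sum_eq_of_isOpen {V : Type*} [AddCommGroup V] [Module ℝ V] [TopologicalSpace V]
    [ContinuousAdd V] [ContinuousSMul ℝ V] {S : Set V} (hS : IsOpen S) {m : ℕ} {v : Fin m → V}
    (hv : ∀ i, v i ∈ S) (hneg : -(∑ i, v i) ∈ S) (h : V) :
    ∃ n : ℕ, 0 < n ∧ ∃ a : Fin n → V, (∀ j, a j ∈ S) ∧ ∑ j, a j = h := by
  obtain ⟨K, hK, hb⟩ := exists_nat_add_inv_smul_mem (hS.mem_nhds hneg) h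
  set c : Fin (m + 1) → V := Fin.cons (-(∑ i, v i) + (K : ℝ)⁻¹ • h) v
  have hcS : ∀ i, c i ∈ S := Fin.cases hb hv
  refine ⟨K * (m + 1), Nat.mul_pos hK m.succ_pos, fun j => c (finProdFinEquiv.symm j).2,
    fun j => hcS _, ?_⟩
  have hK' : (K : ℝ) ≠ 0 := Nat.cast_ne_zero.2 hK.ne'
  rw [sum_finProdFinEquiv_symm_snd, Fin.sum_univ_succ]
  simp [c, ← Nat.cast_smul_eq_nsmul ℝ, smul_smul, hK']

theorem exists_radii_sum_mem_ball {ι V : Type*} [Fintype ι] [NormedAddCommGroup V] {a : ι → V}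
    (ha : ∀ i, a i ≠ 0) {η : ℝ} (hη : 0 < η) :
    ∃ r : ι → ℝ, (∀ i, 0 < r i) ∧ (∀ i, (0 : V) ∉ closedBall (a i) (r i)) ∧
      ∀ f : ι → V, (∀ i, f i ∈ ball (a i) (r i)) → ∑ i, f i ∈ ball (∑ i, a i) η := by
  set n : ℝ := (Fintype.card ι : ℝ)
  have hn : 0 < n + 1 := by positivity
  refine ⟨fun i => min (‖a i‖ / 2) (η / (n + 1)), fun i => ?_, fun i h0 => ?_, fun f hf => ?_⟩
  · exact lt_min (half_pos (norm_pos_iff.2 (ha i))) (div_pos hη hn)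
  · rw [mem_closedBall, dist_zero_left] at h0
    have ha_pos := norm_pos_iff.2 (ha i)
    linarith [min_le_left (‖a i‖ / 2) (η / (n + 1))]
  · rw [mem_ball]
    calc dist (∑ i, f i) (∑ i, a i) ≤ ∑ _i : ι, η / (n + 1) :=
          dist_sum_sum_le_of_le _ fun i _ => (mem_ball.1 (hf i)).le.trans (min_le_right _ _)
      _ = n * η / (n + 1) := by simp [n, mul_div_assoc]
      _ < η := by rw [div_lt_iff₀ hn]; nlinarith

theorem withDensity_ofReal_pos_of_isOpen {X : Type*} [TopologicalSpace X] [MeasurableSpace X]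
    [OpensMeasurableSpace X] (μ : Measure X) [μ.IsOpenPosMeasure] {q : X → ℝ} (hq : Continuous q)
    {U : Set X} (hU : IsOpen U) {x : X} (hxU : x ∈ U) (hx : 0 < q x) :
    0 < μ.withDensity (fun z => ENNReal.ofReal (q z)) U := by
  rw [pos_iff_ne_zero, Ne, withDensity_apply_eq_zero' (by fun_prop)]
  simp only [ne_eq, ENNReal.ofReal_eq_zero, not_le]
  exact ((isOpen_lt continuous_const hq).inter hU).measure_ne_zero μ ⟨x, hx, hxU⟩

theorem stmt_18_general (d : ℕ) (hd : 0 < d) (q : EuclideanSpace ℝ (Fin d) → ℝ)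
    (hqc : Continuous q)
    (hqe : ∀ i : Fin d, 0 < q (EuclideanSpace.single i 1))
    (hqm : 0 < q (-(∑ i : Fin d, EuclideanSpace.single i (1 : ℝ)))) :
    ∀ h : EuclideanSpace ℝ (Fin d), ∀ η : ℝ, 0 < η →
      ∃ n : ℕ, 0 < n ∧ ∃ (r : Fin n → ℝ) (a : Fin n → EuclideanSpace ℝ (Fin d)),
        (∀ i, 0 < r i) ∧ (∀ i, a i ≠ 0) ∧
        (∀ i, (0 : EuclideanSpace ℝ (Fin d)) ∉ closedBall (a i) (r i)) ∧
        (∀ i, 0 < (volume.withDensity fun z => ENNReal.ofReal (q z))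
          (ball (a i) (r i))) ∧
        (∀ f : Fin n → EuclideanSpace ℝ (Fin d),
          (∀ i, f i ∈ ball (a i) (r i)) → (∑ i, f i) ∈ ball h η) := by
  intro h η hη
  have hsum_ne : ∑ i : Fin d, EuclideanSpace.single i (1 : ℝ) ≠ 0 := fun h0 => by
    simpa using congrArg (· ⟨0, hd⟩) h0
  obtain ⟨n, hn, a, haS, rfl⟩ := exists_fin_sum_eq_of_isOpen
    ((isOpen_lt continuous_const hqc).inter isOpen_ne) (S := {z | 0 < q z} ∩ {z | z ≠ 0})
    (fun i => ⟨hqe i, by simp⟩) ⟨hqm, neg_ne_zero.2 hsum_ne⟩ h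
  obtain ⟨r, hr, h0, hball⟩ := exists_radii_sum_mem_ball (fun i => (haS i).2) hη
  exact ⟨n, hn, r, a, hr, fun i => (haS i).2, h0,
    fun i => withDensity_ofReal_pos_of_isOpen _ hqc isOpen_ball (mem_ball_self (hr i)) (haS i).1,
    hball⟩

/-- If `ν(dz) = q(z) dz` on `ℝ^d` with `q` continuous, `q(e_i) > 0` for each basis vector
and `q(-∑ e_i) > 0`, then `ν` satisfies the nondegeneracy condition (Assumption 2.5):
every ball `B(h, η)` contains a sum of balls of positive `ν`-measure avoiding `0`. -/
theorem stmt_18 (d : ℕ) (hd : 0 < d) (q : EuclideanSpace ℝ (Fin d) → ℝ)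
    (hq0 : ∀ z, 0 ≤ q z) (hqc : Continuous q)
    (hqe : ∀ i : Fin d, 0 < q (EuclideanSpace.single i 1))
    (hqm : 0 < q (-(∑ i : Fin d, EuclideanSpace.single i (1 : ℝ)))) :
    ∀ h : EuclideanSpace ℝ (Fin d), ∀ η : ℝ, 0 < η →
      ∃ n : ℕ, 0 < n ∧ ∃ (r : Fin n → ℝ) (a : Fin n → EuclideanSpace ℝ (Fin d)),
        (∀ i, 0 < r i) ∧ (∀ i, a i ≠ 0) ∧
        (∀ i, (0 : EuclideanSpace ℝ (Fin d)) ∉ closedBall (a i) (r i)) ∧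
        (∀ i, 0 < (volume.withDensity fun z => ENNReal.ofReal (q z))
          (ball (a i) (r i))) ∧
        (∀ f : Fin n → EuclideanSpace ℝ (Fin d),
          (∀ i, f i ∈ ball (a i) (r i)) → (∑ i, f i) ∈ ball h η) :=
  stmt_18_general d hd q hqc hqe hqm
end
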